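/- arXiv:2605.27624 — 6 statements merged into one kernel-verified Lean document; each statement's English description precedes it below -/
import Mathlib

section
/- If G is a d-regular graph with chromatic index d, then the proper additive chromatic index of G equals d. -/
open scoped Classical
open Finset

namespace AddEdge

variable {V : Type*} [Fintype V] [DecidableEq V]

/-- `N'(e)`-sum: the sum of the colors of the edges of `G` sharing an endpoint
with `e`, excluding `e` itself. -/
noncomputable def nbrSum (G : SimpleGraph V) (c : Sym2 V → ℕ) (e : Sym2 V) : ℕ :=
  ∑ f ∈ univ.filter (fun f => f ∈ G.edgeSet ∧ f ≠ e ∧ ∃ v, v ∈ e ∧ v ∈ f), c f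

/-- `c` is a proper edge coloring of `G`: distinct incident edges get distinct colors. -/
def IsProperEdgeColoring (G : SimpleGraph V) (c : Sym2 V → ℕ) : Prop :=
  ∀ e ∈ G.edgeSet, ∀ f ∈ G.edgeSet, e ≠ f → (∃ v, v ∈ e ∧ v ∈ f) → c e ≠ c f

/-- `c` is an additive edge coloring of `G`: distinct incident edges have distinct
sums of colors over their incident-edge neighborhoods. -/
def IsAdditiveEdgeColoring (G : SimpleGraph V) (c : Sym2 V → ℕ) : Prop :=
  ∀ e ∈ G.edgeSet, ∀ f ∈ G.edgeSet, e ≠ f → (∃ v, v ∈ e ∧ v ∈ f) →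
    nbrSum G c e ≠ nbrSum G c f

/-- The chromatic index: the least `k` such that `G` has a proper edge coloring
with colors from `{1, …, k}`. -/
noncomputable def chromIndex (G : SimpleGraph V) : ℕ :=
  sInf {k | ∃ c : Sym2 V → ℕ, (∀ e ∈ G.edgeSet, c e ∈ Finset.Icc 1 k) ∧
    IsProperEdgeColoring G c}

/-- The proper additive chromatic index `η'_p(G)`: the least `k` such that `G` has an
edge coloring with colors from `{1, …, k}` that is both proper and additive. -/
noncomputable def properAddIndex (G : SimpleGraph V) : ℕ :=
  sInf {k | ∃ c : Sym2 V → ℕ, (∀ e ∈ G.edgeSet, c e ∈ Finset.Icc 1 k) ∧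
    IsProperEdgeColoring G c ∧ IsAdditiveEdgeColoring G c}

noncomputable def vF (G : SimpleGraph V) (v : V) : Finset (Sym2 V) :=
  univ.filter (fun f => f ∈ G.edgeSet ∧ v ∈ f)

lemma mem_vF {G : SimpleGraph V} {v : V} {f : Sym2 V} :
    f ∈ vF G v ↔ f ∈ G.edgeSet ∧ v ∈ f := by
  simp [vF]

lemma card_vF {G : SimpleGraph V} {d : ℕ} (hreg : G.IsRegularOfDegree d) (v : V) :
    (vF G v).card = d := by
  classical
  have : vF G v = G.incidenceFinset v := by
    ext f
    simp [mem_vF, SimpleGraph.mem_incidenceFinset, SimpleGraph.incidenceSet]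
  rw [this, SimpleGraph.card_incidenceFinset_eq_degree, hreg v]

lemma sum_vF {G : SimpleGraph V} {d : ℕ} (c : Sym2 V → ℕ)
    (hreg : G.IsRegularOfDegree d)
    (hb : ∀ e ∈ G.edgeSet, c e ∈ Finset.Icc 1 d)
    (hp : IsProperEdgeColoring G c) (v : V) :
    ∑ f ∈ vF G v, c f = ∑ i ∈ Finset.Icc 1 d, i := by
  classical
  have hinj : Set.InjOn c (vF G v) := by
    intro e he f hf hef
    by_contra hne
    exact hp e (mem_vF.1 he).1 f (mem_vF.1 hf).1 hne
      ⟨v, (mem_vF.1 he).2, (mem_vF.1 hf).2⟩ hef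
  have hsub : (vF G v).image c ⊆ Finset.Icc 1 d := by
    intro x hx
    obtain ⟨e, he, rfl⟩ := Finset.mem_image.1 hx
    exact hb e (mem_vF.1 he).1
  have hcard : ((vF G v).image c).card = (Finset.Icc 1 d).card := by
    rw [Finset.card_image_of_injOn hinj, card_vF hreg, Nat.card_Icc]; omega
  have himg : (vF G v).image c = Finset.Icc 1 d :=
    Finset.eq_of_subset_of_card_le hsub (le_of_eq hcard.symm)
  rw [← himg, Finset.sum_image (fun a ha b hb => hinj ha hb)]


lemma gauss (n : ℕ) : 2 * ∑ i ∈ Finset.Icc 1 n, i = n * (n + 1) := by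
  induction n with
  | zero => simp
  | succ n ih =>
    rw [← Finset.Ico_add_one_right_eq_Icc, Finset.sum_Ico_succ_top (by omega), Finset.Ico_add_one_right_eq_Icc,
      Nat.mul_add 2, ih]
    ring

lemma nbrSum_eq {G : SimpleGraph V} {d : ℕ} (c : Sym2 V → ℕ)
    (hreg : G.IsRegularOfDegree d)
    (hb : ∀ e ∈ G.edgeSet, c e ∈ Finset.Icc 1 d)
    (hp : IsProperEdgeColoring G c) {e : Sym2 V} (he : e ∈ G.edgeSet) :
    nbrSum G c e + 2 * c e = d * (d + 1) := by
  classical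
  obtain ⟨u, v⟩ := e
  have hadj : G.Adj u v := he
  have huv : u ≠ v := hadj.ne
  have hT : univ.filter (fun f => f ∈ G.edgeSet ∧ f ≠ s(u,v) ∧ ∃ w, w ∈ s(u,v) ∧ w ∈ f)
      = (vF G u ∪ vF G v).erase s(u,v) := by
    ext f
    simp only [Finset.mem_filter, Finset.mem_univ, true_and, Finset.mem_erase,
      Finset.mem_union, mem_vF, Sym2.mem_iff]
    constructor
    · rintro ⟨hf, hne, w, hw1, hw2⟩
      refine ⟨hne, ?_⟩
      rcases hw1 with rfl | rfl
      · exact Or.inl ⟨hf, hw2⟩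
      · exact Or.inr ⟨hf, hw2⟩
    · rintro ⟨hne, (⟨hf, hu⟩ | ⟨hf, hv⟩)⟩
      · exact ⟨hf, hne, u, Or.inl rfl, hu⟩
      · exact ⟨hf, hne, v, Or.inr rfl, hv⟩
  have hinter : vF G u ∩ vF G v = {s(u,v)} := by
    ext f
    simp only [Finset.mem_inter, mem_vF, Finset.mem_singleton]
    constructor
    · rintro ⟨⟨hf, hu⟩, ⟨_, hv⟩⟩
      have := G.incidenceSet_inter_incidenceSet_of_adj hadj
      have : f ∈ G.incidenceSet u ∩ G.incidenceSet v := ⟨⟨hf, hu⟩, ⟨hf, hv⟩⟩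
      rw [G.incidenceSet_inter_incidenceSet_of_adj hadj] at this
      exact this
    · rintro rfl
      exact ⟨⟨he, Sym2.mem_mk_left u v⟩, ⟨he, Sym2.mem_mk_right u v⟩⟩
  have hmemU : s(u,v) ∈ vF G u ∪ vF G v :=
    Finset.mem_union.2 (Or.inl (mem_vF.2 ⟨he, Sym2.mem_mk_left u v⟩))
  have hsumU : ∑ f ∈ vF G u ∪ vF G v, c f + c s(u,v) =
      ∑ f ∈ vF G u, c f + ∑ f ∈ vF G v, c f := by
    rw [← Finset.sum_union_inter, hinter, Finset.sum_singleton]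
  have herase : ∑ f ∈ (vF G u ∪ vF G v).erase s(u,v), c f + c s(u,v)
      = ∑ f ∈ vF G u ∪ vF G v, c f := by
    rw [add_comm, Finset.add_sum_erase _ _ hmemU]
  have h2S := gauss d
  have hsu := sum_vF c hreg hb hp u
  have hsv := sum_vF c hreg hb hp v
  show nbrSum G c s(u,v) + 2 * c s(u,v) = d * (d + 1)
  unfold nbrSum
  rw [hT]
  omega


/-- If `G` is `d`-regular with chromatic index `d`, then the proper
additive chromatic index of `G` equals `d`. -/
theorem properAddIndex_eq_of_class1 (G : SimpleGraph V) (d : ℕ)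
    (hreg : G.IsRegularOfDegree d) (hchrom : chromIndex G = d) :
    properAddIndex G = d := by
  classical
  set S : Set ℕ := {k | ∃ c : Sym2 V → ℕ, (∀ e ∈ G.edgeSet, c e ∈ Finset.Icc 1 k) ∧
    IsProperEdgeColoring G c} with hS
  set S' : Set ℕ := {k | ∃ c : Sym2 V → ℕ, (∀ e ∈ G.edgeSet, c e ∈ Finset.Icc 1 k) ∧
    IsProperEdgeColoring G c ∧ IsAdditiveEdgeColoring G c} with hS'
  have hsub : S' ⊆ S := by
    rintro k ⟨c, hb, hp, _⟩
    exact ⟨c, hb, hp⟩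
  have hSne : S.Nonempty := by
    refine ⟨Fintype.card (Sym2 V), fun f => (Fintype.equivFin (Sym2 V) f) + 1, ?_, ?_⟩
    · intro e _
      simp only [Finset.mem_Icc]
      exact ⟨Nat.le_add_left _ _, Nat.succ_le_of_lt (Fin.is_lt _)⟩
    · intro e _ f _ hef _ h
      simp only [add_left_inj] at h
      exact hef ((Fintype.equivFin (Sym2 V)).injective (Fin.val_injective h))
  have hdS : d ∈ S := by
    have := Nat.sInf_mem hSne
    rwa [show sInf S = d from hchrom] at this
  obtain ⟨c, hb, hp⟩ := hdS
  have hdS' : d ∈ S' := by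
    refine ⟨c, hb, hp, ?_⟩
    intro e he f hf hef hinc
    have h1 := nbrSum_eq c hreg hb hp he
    have h2 := nbrSum_eq c hreg hb hp hf
    have hc := hp e he f hf hef hinc
    omega
  have hS'ne : S'.Nonempty := ⟨d, hdS'⟩
  refine le_antisymm (Nat.sInf_le hdS') ?_
  calc d = sInf S := hchrom.symm
    _ ≤ sInf S' := Nat.sInf_le (hsub (Nat.sInf_mem hS'ne))


end AddEdge
end

section
/- Let G be a d-regular graph and A a set of d+1 positive integers such that the set A⁻ of nonzero pairwise differences of A is disjoint from 2A⁻ (the set of doubled nonzero differences). Then every proper edge coloring of G with colors from A is an additive edge coloring of G. -/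
/-!
A proper coloring of a `d`-regular graph with the `d + 1` colors of `A` misses exactly one
color `m v` at each vertex `v`, so the colors at `v` add up to `ΣA - m v`. Each edge `xy` lies
in both vertex sums at its ends, hence `N'(xy)` sums to `2ΣA - m x - m y - 2 c(xy)`. Equal sums
on incident edges `xy`, `xw` thus give `m w - m y = 2 (c(xy) - c(xw))`: an element of `2A⁻`
that lies in `A⁻` unless `m y = m w`, and then `c(xy) = c(xw)` contradicts properness.
-/

open scoped Classical
open Finset

namespace AddEdge

variable {V : Type*} [Fintype V] [DecidableEq V]

theorem _root_.Finset.exists_mem_sum_add_eq_sum_of_subset_of_card_eq_add_one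
    {M : Type*} [AddCommMonoid M] {s t : Finset M} (hst : s ⊆ t)
    (hcard : t.card = s.card + 1) : ∃ m ∈ t, ∑ a ∈ s, a + m = ∑ a ∈ t, a := by
  obtain ⟨m, hm⟩ := card_eq_one.mp (by rw [card_sdiff_of_subset hst]; omega : (t \ s).card = 1)
  refine ⟨m, (mem_sdiff.mp (hm ▸ mem_singleton_self m)).1, ?_⟩
  rw [← sum_sdiff hst, hm, sum_singleton, add_comm]

noncomputable def colorSumAt (G : SimpleGraph V) (c : Sym2 V → ℕ) (v : V) : ℕ :=
  ∑ g ∈ G.incidenceFinset v, c g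

lemma IsProperEdgeColoring.injOn_incidenceFinset {G : SimpleGraph V} {c : Sym2 V → ℕ}
    (hc : IsProperEdgeColoring G c) (v : V) : Set.InjOn c (G.incidenceFinset v) := by
  intro g hg g' hg' hgg'
  rw [SimpleGraph.coe_incidenceFinset] at hg hg'
  by_contra hne
  exact hc g hg.1 g' hg'.1 hne ⟨v, hg.2, hg'.2⟩ hgg'

lemma exists_colorSumAt_add_eq_sum {G : SimpleGraph V} {d : ℕ} (hreg : G.IsRegularOfDegree d)
    {A : Finset ℕ} (hAcard : A.card = d + 1) {c : Sym2 V → ℕ} (hcol : ∀ e ∈ G.edgeSet, c e ∈ A)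
    (hc : IsProperEdgeColoring G c) (v : V) :
    ∃ m ∈ A, colorSumAt G c v + m = ∑ a ∈ A, a := by
  have hinj := hc.injOn_incidenceFinset v
  have hsub : (G.incidenceFinset v).image c ⊆ A := by
    simp only [image_subset_iff, SimpleGraph.mem_incidenceFinset]
    exact fun g hg => hcol g hg.1
  have hcard : A.card = ((G.incidenceFinset v).image c).card + 1 := by
    rw [card_image_of_injOn hinj, SimpleGraph.card_incidenceFinset_eq_degree, hreg v, hAcard]
  obtain ⟨m, hm, hsum⟩ := exists_mem_sum_add_eq_sum_of_subset_of_card_eq_add_one hsub hcard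
  exact ⟨m, hm, by rwa [sum_image hinj] at hsum⟩

lemma filter_incident_eq_erase_union {G : SimpleGraph V} {u v : V} (huv : G.Adj u v) :
    univ.filter (fun f => f ∈ G.edgeSet ∧ f ≠ s(u, v) ∧ ∃ w, w ∈ s(u, v) ∧ w ∈ f) =
      (G.incidenceFinset u ∪ G.incidenceFinset v).erase s(u, v) := by
  ext g
  simp only [mem_filter, mem_univ, true_and, mem_erase, mem_union,
    SimpleGraph.mem_incidenceFinset, SimpleGraph.incidenceSet, Set.mem_ofPred_eq, Sym2.mem_iff]
  constructor
  · rintro ⟨hg, hne, w, rfl | rfl, hw⟩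
    · exact ⟨hne, .inl ⟨hg, hw⟩⟩
    · exact ⟨hne, .inr ⟨hg, hw⟩⟩
  · rintro ⟨hne, ⟨hg, hw⟩ | ⟨hg, hw⟩⟩
    · exact ⟨hg, hne, u, .inl rfl, hw⟩
    · exact ⟨hg, hne, v, .inr rfl, hw⟩

lemma nbrSum_add_two_mul {G : SimpleGraph V} (c : Sym2 V → ℕ) {u v : V} (huv : G.Adj u v) :
    nbrSum G c s(u, v) + 2 * c s(u, v) = colorSumAt G c u + colorSumAt G c v := by
  have hmem : s(u, v) ∈ G.incidenceFinset u ∪ G.incidenceFinset v :=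
    mem_union_left _ <| (SimpleGraph.mem_incidenceFinset _ _ _).mpr <|
      G.mk'_mem_incidenceSet_left_iff.mpr huv
  have hinter : G.incidenceFinset u ∩ G.incidenceFinset v = {s(u, v)} := by
    rw [← coe_inj, coe_inter, SimpleGraph.coe_incidenceFinset, SimpleGraph.coe_incidenceFinset,
      coe_singleton, G.incidenceSet_inter_incidenceSet_of_adj huv]
  rw [nbrSum, filter_incident_eq_erase_union huv, two_mul, ← add_assoc, sum_erase_add _ _ hmem,
    colorSumAt, colorSumAt, ← sum_union_inter, hinter, sum_singleton]

theorem additive_of_diff_condition_general (G : SimpleGraph V) (d : ℕ)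
    (hreg : G.IsRegularOfDegree d) (A : Finset ℕ)
    (hAcard : A.card = d + 1)
    (hdiff : ∀ x ∈ A, ∀ y ∈ A, x ≠ y → ∀ z ∈ A, ∀ w ∈ A, z ≠ w →
      (x : ℤ) - y ≠ 2 * ((z : ℤ) - w))
    (c : Sym2 V → ℕ) (hcol : ∀ e ∈ G.edgeSet, c e ∈ A)
    (hc : IsProperEdgeColoring G c) :
    IsAdditiveEdgeColoring G c := by
  rintro e he f hf hef ⟨x, hxe, hxf⟩ hsum
  obtain ⟨y, rfl⟩ := Sym2.mem_iff_exists.mp hxe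
  obtain ⟨w, rfl⟩ := Sym2.mem_iff_exists.mp hxf
  have hcc : c s(x, y) ≠ c s(x, w) :=
    hc _ he _ hf hef ⟨x, Sym2.mem_mk_left x y, Sym2.mem_mk_left x w⟩
  have hy := nbrSum_add_two_mul c (G.mem_edgeSet.mp he)
  have hw := nbrSum_add_two_mul c (G.mem_edgeSet.mp hf)
  obtain ⟨my, hmyA, hmy⟩ := exists_colorSumAt_add_eq_sum hreg hAcard hcol hc y
  obtain ⟨mw, hmwA, hmw⟩ := exists_colorSumAt_add_eq_sum hreg hAcard hcol hc w
  by_cases hmm : my = mw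
  · omega
  · exact hdiff mw hmwA my hmyA (Ne.symm hmm) _ (hcol _ he) _ (hcol _ hf) hcc (by omega)

/-- If `A` is a set of `d+1` positive integers whose set of nonzero
differences `A⁻` is disjoint from `2A⁻`, then every proper edge coloring of a
`d`-regular graph `G` with colors from `A` is an additive edge coloring. -/
theorem additive_of_diff_condition (G : SimpleGraph V) (d : ℕ)
    (hreg : G.IsRegularOfDegree d) (A : Finset ℕ)
    (hApos : ∀ a ∈ A, 0 < a) (hAcard : A.card = d + 1)
    (hdiff : ∀ x ∈ A, ∀ y ∈ A, x ≠ y → ∀ z ∈ A, ∀ w ∈ A, z ≠ w →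
      (x : ℤ) - y ≠ 2 * ((z : ℤ) - w))
    (c : Sym2 V → ℕ) (hcol : ∀ e ∈ G.edgeSet, c e ∈ A)
    (hc : IsProperEdgeColoring G c) :
    IsAdditiveEdgeColoring G c :=
  additive_of_diff_condition_general G d hreg A hAcard hdiff c hcol hc

end AddEdge
end

section
/- Define sets A₁ = {1,2} and A_{n+1} = A_n ∪ (A_n + 3·max(A_n) − 2). Then for every n ≥ 1, the set of nonzero pairwise differences A_n⁻ is disjoint from its doubling 2A_n⁻; that is, no nonzero difference of two elements of A_n is twice another nonzero difference of two elements of A_n. -/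
private lemma step_lemma (S : Finset ℕ)
    (h1 : ∀ a ∈ S, 1 ≤ a) (hM2 : 2 ≤ S.sup id)
    (hS : ∀ x ∈ S, ∀ y ∈ S, x ≠ y → ∀ z ∈ S, ∀ w ∈ S, z ≠ w →
      (x : ℤ) - y ≠ 2 * ((z : ℤ) - w)) :
    ∀ x ∈ S ∪ S.image (fun a => a + (3 * S.sup id - 2)),
    ∀ y ∈ S ∪ S.image (fun a => a + (3 * S.sup id - 2)), x ≠ y →
    ∀ z ∈ S ∪ S.image (fun a => a + (3 * S.sup id - 2)),
    ∀ w ∈ S ∪ S.image (fun a => a + (3 * S.sup id - 2)), z ≠ w →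
      (x : ℤ) - y ≠ 2 * ((z : ℤ) - w) := by
  have hub : ∀ a ∈ S, a ≤ S.sup id := fun a ha => Finset.le_sup (f := id) ha
  intro x hx y hy hxy z hz w hw hzw heq
  simp only [Finset.mem_union, Finset.mem_image] at hx hy hz hw
  rcases hx with hx | ⟨x', hx, rfl⟩ <;>
  rcases hy with hy | ⟨y', hy, rfl⟩ <;>
  rcases hz with hz | ⟨z', hz, rfl⟩ <;>
  rcases hw with hw | ⟨w', hw, rfl⟩ <;>
  · have B1 := h1 _ hx; have B2 := hub _ hx
    have B3 := h1 _ hy; have B4 := hub _ hy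
    have B5 := h1 _ hz; have B6 := hub _ hz
    have B7 := h1 _ hw; have B8 := hub _ hw
    first
    | omega
    | exact hS _ hx _ hy (by omega) _ hz _ hw (by omega) (by omega)

/-- With `A 1 = {1,2}` and `A (n+1) = A n ∪ (A n + 3·max(A n) − 2)`,
for every `n ≥ 1`, no nonzero difference of two elements of `A n` is twice a
nonzero difference of two elements of `A n` (i.e. `(A n)⁻ ∩ 2(A n)⁻ = ∅`). -/
theorem diff_Aset
    (A : ℕ → Finset ℕ) (hA1 : A 1 = {1, 2})
    -- `(A n).max' _ = (A n).sup id` for the nonempty finsets of naturals at hand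
    (hrec : ∀ n, 1 ≤ n →
      A (n + 1) = A n ∪ (A n).image (fun a => a + (3 * (A n).sup id - 2)))
    (n : ℕ) (hn : 1 ≤ n) :
    ∀ x ∈ A n, ∀ y ∈ A n, x ≠ y → ∀ z ∈ A n, ∀ w ∈ A n, z ≠ w →
      (x : ℤ) - y ≠ 2 * ((z : ℤ) - w) := by
  suffices h : (∀ a ∈ A n, 1 ≤ a) ∧ 2 ≤ (A n).sup id ∧
      (∀ x ∈ A n, ∀ y ∈ A n, x ≠ y → ∀ z ∈ A n, ∀ w ∈ A n, z ≠ w →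
        (x : ℤ) - y ≠ 2 * ((z : ℤ) - w)) from h.2.2
  induction n, hn using Nat.le_induction with
  | base =>
    rw [hA1]
    refine ⟨?_, ?_, ?_⟩
    · intro a ha
      simp only [Finset.mem_insert, Finset.mem_singleton] at ha
      omega
    · decide
    · intro x hx y hy hxy z hz w hw hzw
      simp only [Finset.mem_insert, Finset.mem_singleton] at hx hy hz hw
      rcases hx with rfl | rfl <;> rcases hy with rfl | rfl <;>
      rcases hz with rfl | rfl <;> rcases hw with rfl | rfl <;> omega
  | succ m hm ih =>
    obtain ⟨ih1, ih2, ih3⟩ := ih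
    rw [hrec m hm]
    refine ⟨?_, ?_, step_lemma (A m) ih1 ih2 ih3⟩
    · intro a ha
      simp only [Finset.mem_union, Finset.mem_image] at ha
      rcases ha with ha | ⟨b, hb, rfl⟩
      · exact ih1 a ha
      · have := ih1 b hb; omega
    · exact le_trans ih2 (Finset.sup_mono Finset.subset_union_left)
end

section
/- For every n ≥ 1 there exists a set A of 2ⁿ positive integers with max(A) = (4ⁿ + 2)/3 such that no nonzero difference of two elements of A equals twice a nonzero difference of two elements of A. -/
def Aset : ℕ → Finset ℕ
  | 0 => {1}
  | n + 1 => Aset n ∪ (Aset n).image (· + 4 ^ n)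

lemma mem_rep {n x : ℕ} (hx : x ∈ Aset (n + 1)) :
    ∃ b ∈ Aset n, x = b ∨ x = b + 4 ^ n := by
  simp only [Aset, Finset.mem_union, Finset.mem_image] at hx
  rcases hx with h | ⟨b, hb, rfl⟩
  · exact ⟨x, h, Or.inl rfl⟩
  · exact ⟨b, hb, Or.inr rfl⟩

lemma key (n : ℕ) :
    (∀ a ∈ Aset n, 0 < a ∧ 3 * a ≤ 4 ^ n + 2) ∧ (Aset n).card = 2 ^ n ∧
      3 * (Aset n).sup id = 4 ^ n + 2 ∧
      (∀ x ∈ Aset n, ∀ y ∈ Aset n, x ≠ y → ∀ z ∈ Aset n, ∀ w ∈ Aset n, z ≠ w →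
        (x : ℤ) - y ≠ 2 * ((z : ℤ) - w)) := by
  induction n with
  | zero =>
    refine ⟨?_, ?_, ?_, ?_⟩
    · intro a ha; simp [Aset] at ha; omega
    · simp [Aset]
    · simp [Aset]
    · intro x hx y hy hxy
      simp [Aset] at hx hy
      exact absurd (hx.trans hy.symm) hxy
  | succ n ih =>
    obtain ⟨hbd, hcard, hsup, hdiff⟩ := ih
    have h1P : 1 ≤ 4 ^ n := Nat.one_le_pow _ _ (by norm_num)
    have h41 : 4 ^ (n + 1) = 4 * 4 ^ n := by ring
    have hdisj : Disjoint (Aset n) ((Aset n).image (· + 4 ^ n)) := by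
      rw [Finset.disjoint_left]
      intro a ha hmem
      simp only [Finset.mem_image] at hmem
      obtain ⟨b, hb, hba⟩ := hmem
      have g1 := (hbd a ha).2
      have g2 := (hbd b hb).1
      omega
    refine ⟨?_, ?_, ?_, ?_⟩
    · intro a ha
      obtain ⟨b, hb, h⟩ := mem_rep ha
      have := hbd b hb
      rcases h with rfl | rfl <;> omega
    · show (Aset n ∪ (Aset n).image (· + 4 ^ n)).card = 2 ^ (n + 1)
      rw [Finset.card_union_of_disjoint hdisj,
        Finset.card_image_of_injective _ (add_left_injective _), hcard]
      ring
    · have hne : (Aset n).Nonempty := Finset.card_pos.mp (by rw [hcard]; positivity)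
      have hs : (Aset (n + 1)).sup id = (Aset n).sup id + 4 ^ n := by
        apply le_antisymm
        · apply Finset.sup_le
          intro x hx
          obtain ⟨b, hb, h⟩ := mem_rep hx
          have hle := Finset.le_sup (f := id) hb
          simp only [id] at hle ⊢
          rcases h with rfl | rfl <;> omega
        · have hmem : (Aset n).sup id + 4 ^ n ∈ Aset (n + 1) := by
            obtain ⟨m, hm, hmax⟩ := Finset.exists_mem_eq_sup (Aset n) hne id
            show _ ∈ Aset n ∪ (Aset n).image (· + 4 ^ n)
            rw [hmax]
            exact Finset.mem_union_right _ (Finset.mem_image.mpr ⟨m, hm, rfl⟩)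
          exact Finset.le_sup (f := id) hmem
      rw [hs]; omega
    · intro x hx y hy hxy z hz w hw hzw heq
      obtain ⟨a, ha, hx'⟩ := mem_rep hx
      obtain ⟨b, hb, hy'⟩ := mem_rep hy
      obtain ⟨c, hc, hz'⟩ := mem_rep hz
      obtain ⟨d, hd, hw'⟩ := mem_rep hw
      have hPz : (1 : ℤ) ≤ 4 ^ n := one_le_pow₀ (by norm_num)
      have Ba1 : (1 : ℤ) ≤ (a : ℤ) := by exact_mod_cast (hbd a ha).1
      have Ba2 : 3 * (a : ℤ) ≤ 4 ^ n + 2 := by exact_mod_cast (hbd a ha).2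
      have Bb1 : (1 : ℤ) ≤ (b : ℤ) := by exact_mod_cast (hbd b hb).1
      have Bb2 : 3 * (b : ℤ) ≤ 4 ^ n + 2 := by exact_mod_cast (hbd b hb).2
      have Bc1 : (1 : ℤ) ≤ (c : ℤ) := by exact_mod_cast (hbd c hc).1
      have Bc2 : 3 * (c : ℤ) ≤ 4 ^ n + 2 := by exact_mod_cast (hbd c hc).2
      have Bd1 : (1 : ℤ) ≤ (d : ℤ) := by exact_mod_cast (hbd d hd).1
      have Bd2 : 3 * (d : ℤ) ≤ 4 ^ n + 2 := by exact_mod_cast (hbd d hd).2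
      rcases hx' with rfl | rfl <;> rcases hy' with rfl | rfl <;>
          rcases hz' with rfl | rfl <;> rcases hw' with rfl | rfl <;>
          push_cast at heq <;>
          first
          | exact hdiff _ ha _ hb (by omega) _ hc _ hd
              (by omega) (by linarith)
          | linarith

/-- For every `n ≥ 1` there is a set `A` of `2 ^ n` positive integers
with `max A = (4 ^ n + 2) / 3` (stated as `3 * A.sup id = 4 ^ n + 2`; note
`A.sup id` is the maximum of a nonempty finset of naturals) such that no nonzero
difference of two elements of `A` equals twice a nonzero difference of two
elements of `A`. -/
theorem exists_good_set (n : ℕ) (hn : 1 ≤ n) :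
    ∃ A : Finset ℕ, (∀ a ∈ A, 0 < a) ∧ A.card = 2 ^ n ∧
      3 * A.sup id = 4 ^ n + 2 ∧
      (∀ x ∈ A, ∀ y ∈ A, x ≠ y → ∀ z ∈ A, ∀ w ∈ A, z ≠ w →
        (x : ℤ) - y ≠ 2 * ((z : ℤ) - w)) := by
  obtain ⟨h1, h2, h3, h4⟩ := key n
  exact ⟨Aset n, fun a ha => (h1 a ha).1, h2, h3, h4⟩
end

section
/- If G is a d-regular graph with chromatic index d+1 that admits a spaced (d+1)-edge-coloring, then the proper additive chromatic index of G is at most 2d. -/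
open scoped Classical
open Finset

namespace AddEdge

variable {V : Type*} [Fintype V] [DecidableEq V]

/-- `e'` is 2-reachable from `e`: there is a path of length two in `G` from an
endpoint of `e` to an endpoint of `e'`. -/
def TwoReachable (G : SimpleGraph V) (e e' : Sym2 V) : Prop :=
  ∃ x y z : V, x ∈ e ∧ z ∈ e' ∧ G.Adj x y ∧ G.Adj y z ∧ x ≠ z

/-- `c` is a spaced `(d+1)`-edge-coloring of the `d`-regular graph `G`: a proper
edge coloring with colors `{1, …, d+1}` such that no edge colored `d+1` is
2-reachable from an edge colored `d+1`. -/
def IsSpacedColoring (G : SimpleGraph V) (d : ℕ) (c : Sym2 V → ℕ) : Prop :=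
  (∀ e ∈ G.edgeSet, c e ∈ Finset.Icc 1 (d + 1)) ∧ IsProperEdgeColoring G c ∧
    ∀ e ∈ G.edgeSet, ∀ e' ∈ G.edgeSet, c e = d + 1 → c e' = d + 1 →
      ¬ TwoReachable G e e'

/-- The resistance of a `d`-regular Vizing-class-2 graph `G`: the minimum number of
edges colored `d+1` over all proper `(d+1)`-edge-colorings of `G`. -/
noncomputable def resistance (G : SimpleGraph V) (d : ℕ) : ℕ :=
  sInf {r | ∃ c : Sym2 V → ℕ, (∀ e ∈ G.edgeSet, c e ∈ Finset.Icc 1 (d + 1)) ∧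
    IsProperEdgeColoring G c ∧
    (univ.filter (fun e => e ∈ G.edgeSet ∧ c e = d + 1)).card = r}


/-! ### Auxiliary machinery for the proof of Statement 11 -/

/-- A `Sym2` element containing two distinct vertices is the pair of them. -/
private lemma sym2_eq_of_mem_of_mem {v w : V} (hvw : v ≠ w) {f : Sym2 V}
    (hv : v ∈ f) (hw : w ∈ f) : f = s(v, w) := by
  induction f with
  | _ a b =>
    rw [Sym2.mem_iff] at hv hw
    obtain rfl | rfl := hv <;> obtain rfl | rfl := hw
    · exact absurd rfl hvw
    · rfl
    · exact Sym2.eq_swap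
    · exact absurd rfl hvw

/-- The set of edges of `G` incident to a vertex `p`, as a `Finset`. -/
private noncomputable def inc (G : SimpleGraph V) (p : V) : Finset (Sym2 V) :=
  univ.filter (fun f => f ∈ G.edgeSet ∧ p ∈ f)

private lemma mem_inc {G : SimpleGraph V} {p : V} {f : Sym2 V} :
    f ∈ inc G p ↔ f ∈ G.edgeSet ∧ p ∈ f := by
  simp [inc]

private lemma card_inc (G : SimpleGraph V) {d : ℕ} (hreg : G.IsRegularOfDegree d) (p : V) :
    (inc G p).card = d := by
  have h : inc G p = G.incidenceFinset p := by
    ext f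
    rw [mem_inc, SimpleGraph.mem_incidenceFinset]
    rfl
  rw [h, SimpleGraph.card_incidenceFinset_eq_degree]
  exact hreg p

/-- In a proper coloring, the coloring is injective on the edges at a vertex. -/
private lemma inj_on_inc {G : SimpleGraph V} {c : Sym2 V → ℕ}
    (hproper : IsProperEdgeColoring G c) (p : V) :
    ∀ f₁ ∈ inc G p, ∀ f₂ ∈ inc G p, c f₁ = c f₂ → f₁ = f₂ := by
  intro f₁ h₁ f₂ h₂ hc
  rw [mem_inc] at h₁ h₂
  by_contra hne
  exact hproper f₁ h₁.1 f₂ h₂.1 hne ⟨p, h₁.2, h₂.2⟩ hc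

/-- Every vertex of a `d`-regular graph with a proper `(d+1)`-coloring misses
exactly one color. -/
private lemma exists_missing (G : SimpleGraph V) {d : ℕ} {c : Sym2 V → ℕ}
    (hrange : ∀ e ∈ G.edgeSet, c e ∈ Finset.Icc 1 (d + 1))
    (hproper : IsProperEdgeColoring G c)
    (hreg : G.IsRegularOfDegree d) (p : V) :
    ∃ m ∈ Finset.Icc 1 (d + 1), (inc G p).image c = (Finset.Icc 1 (d + 1)).erase m := by
  have hinj := inj_on_inc hproper p
  have hsub : (inc G p).image c ⊆ Finset.Icc 1 (d + 1) := by
    intro i hi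
    obtain ⟨f, hf, rfl⟩ := Finset.mem_image.mp hi
    exact hrange f (mem_inc.mp hf).1
  have hcard : ((inc G p).image c).card = d := by
    rw [Finset.card_image_of_injOn (fun x hx y hy => hinj x hx y hy), card_inc G hreg p]
  have hcard2 : (Finset.Icc 1 (d + 1)).card = d + 1 := by
    rw [Nat.card_Icc]; omega
  have hsd : (Finset.Icc 1 (d + 1) \ (inc G p).image c).card = 1 := by
    rw [Finset.card_sdiff_of_subset hsub, hcard, hcard2]; omega
  obtain ⟨m, hm⟩ := Finset.card_eq_one.mp hsd
  have hms : m ∈ Finset.Icc 1 (d + 1) \ (inc G p).image c := hm ▸ Finset.mem_singleton_self m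
  refine ⟨m, (Finset.mem_sdiff.mp hms).1, ?_⟩
  rw [Finset.erase_eq, ← hm, Finset.sdiff_sdiff_eq_self hsub]

/-- Sum of recolored colors at a vertex plus the missing color equals the full sum. -/
private lemma sum_inc_add_missing (G : SimpleGraph V) {d : ℕ} {c : Sym2 V → ℕ} (χ : ℕ → ℕ)
    (hproper : IsProperEdgeColoring G c) {p : V} {m : ℕ} (hm : m ∈ Finset.Icc 1 (d + 1))
    (him : (inc G p).image c = (Finset.Icc 1 (d + 1)).erase m) :
    (∑ f ∈ inc G p, χ (c f)) + χ m = ∑ i ∈ Finset.Icc 1 (d + 1), χ i := by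
  rw [← Finset.sum_image (f := χ) (inj_on_inc hproper p), him,
    Finset.sum_erase_add _ _ hm]

/-- Decomposition of `nbrSum` along the two endpoints of an edge. -/
private lemma nbrSum_add_self (G : SimpleGraph V) (c' : Sym2 V → ℕ) {a b : V} (hab : a ≠ b)
    (hE : s(a, b) ∈ G.edgeSet) :
    nbrSum G c' s(a, b) + (c' s(a, b) + c' s(a, b))
      = (∑ f ∈ inc G a, c' f) + ∑ f ∈ inc G b, c' f := by
  have hmem_a : s(a, b) ∈ inc G a := mem_inc.mpr ⟨hE, by simp⟩
  have hmem_b : s(a, b) ∈ inc G b := mem_inc.mpr ⟨hE, by simp⟩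
  have hdisj : Disjoint ((inc G a).erase s(a, b)) ((inc G b).erase s(a, b)) := by
    rw [Finset.disjoint_left]
    intro g hg1 hg2
    rw [Finset.mem_erase, mem_inc] at hg1 hg2
    exact hg1.1 (sym2_eq_of_mem_of_mem hab hg1.2.2 hg2.2.2)
  have hset : (univ.filter (fun g => g ∈ G.edgeSet ∧ g ≠ s(a, b) ∧ ∃ v, v ∈ s(a, b) ∧ v ∈ g))
      = ((inc G a).erase s(a, b)) ∪ ((inc G b).erase s(a, b)) := by
    ext g
    simp only [Finset.mem_filter, Finset.mem_union, Finset.mem_erase, mem_inc,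
      Finset.mem_univ, true_and, Sym2.mem_iff]
    constructor
    · rintro ⟨hg, hne, v, (rfl | rfl), hv⟩
      · exact Or.inl ⟨hne, hg, hv⟩
      · exact Or.inr ⟨hne, hg, hv⟩
    · rintro (⟨hne, hg, hv⟩ | ⟨hne, hg, hv⟩)
      · exact ⟨hg, hne, a, Or.inl rfl, hv⟩
      · exact ⟨hg, hne, b, Or.inr rfl, hv⟩
  rw [nbrSum, hset, Finset.sum_union hdisj,
    ← Finset.sum_erase_add (inc G a) c' hmem_a, ← Finset.sum_erase_add (inc G b) c' hmem_b]
  ring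

/-- If a `d`-regular graph `G` with chromatic index `d+1` admits a
spaced `(d+1)`-edge-coloring, then `η'_p(G) ≤ 2d`. -/
theorem properAddIndex_le_of_spaced (G : SimpleGraph V) (d : ℕ)
    (hreg : G.IsRegularOfDegree d) (hchrom : chromIndex G = d + 1)
    (hspaced : ∃ c : Sym2 V → ℕ, IsSpacedColoring G d c) :
    properAddIndex G ≤ 2 * d := by
  classical
  obtain ⟨c, hrange, hproper, hspace⟩ := hspaced
  have hd : ∀ e ∈ G.edgeSet, 1 ≤ d := by
    intro e he
    revert he
    refine Sym2.ind (fun a b he => ?_) e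
    have hpos : 0 < G.degree a :=
      (G.degree_pos_iff_exists_adj a).mpr ⟨b, G.mem_edgeSet.mp he⟩
    rw [hreg a] at hpos
    omega
  unfold properAddIndex
  apply Nat.sInf_le
  refine ⟨fun e => (fun i => if i = d + 1 then 2 else 2 * i - 1) (c e), ?_, ?_, ?_⟩
  · -- colors in range
    intro e he
    have h1 := hrange e he
    have hd1 := hd e he
    rw [Finset.mem_Icc] at h1 ⊢
    simp only
    split_ifs <;> omega
  · -- proper
    intro e he f hf hef hsh
    have hne := hproper e he f hf hef hsh
    have h1 := hrange e he
    have h2 := hrange f hf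
    rw [Finset.mem_Icc] at h1 h2
    simp only
    split_ifs <;> omega
  · -- additive
    intro e he f hf hef hsh hsum
    obtain ⟨v, hve, hvf⟩ := hsh
    obtain ⟨w, rfl⟩ := Sym2.mem_iff_exists.mp hve
    obtain ⟨u, rfl⟩ := Sym2.mem_iff_exists.mp hvf
    have hadj_vw : G.Adj v w := G.mem_edgeSet.mp he
    have hadj_vu : G.Adj v u := G.mem_edgeSet.mp hf
    have hvw : v ≠ w := hadj_vw.ne
    have hvu : v ≠ u := hadj_vu.ne
    have hwu : w ≠ u := by
      rintro rfl
      exact hef rfl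
    set χ : ℕ → ℕ := fun i => if i = d + 1 then 2 else 2 * i - 1 with hχdef
    obtain ⟨mw, hmw, himw⟩ := exists_missing G hrange hproper hreg w
    obtain ⟨mu, hmu, himu⟩ := exists_missing G hrange hproper hreg u
    have h1 := nbrSum_add_self G (fun e => χ (c e)) hvw he
    have h2 := nbrSum_add_self G (fun e => χ (c e)) hvu hf
    simp only at h1 h2 hsum
    have hSw := sum_inc_add_missing G χ hproper hmw himw
    have hSu := sum_inc_add_missing G χ hproper hmu himu
    have hkey : χ mw + 2 * χ (c s(v, w)) = χ mu + 2 * χ (c s(v, u)) := by omega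
    have hbw := Finset.mem_Icc.mp hmw
    have hbu := Finset.mem_Icc.mp hmu
    by_cases hmmeq : mw = mu
    · -- equal missing colors: contradicts properness
      have hcc : c s(v, w) ≠ c s(v, u) := hproper _ he _ hf hef ⟨v, by simp, by simp⟩
      have hce := hrange _ he
      have hcf := hrange _ hf
      rw [Finset.mem_Icc] at hce hcf
      rw [hmmeq] at hkey
      have hχeq : χ (c s(v, w)) = χ (c s(v, u)) := by omega
      rw [hχdef] at hχeq
      simp only at hχeq
      split_ifs at hχeq <;> omega
    · by_cases hw1 : mw = d + 1
      · -- parity contradiction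
        have hu1 : mu ≠ d + 1 := fun h => hmmeq (by rw [hw1, h])
        rw [hχdef] at hkey
        simp only at hkey
        rw [if_pos hw1, if_neg hu1] at hkey
        omega
      · by_cases hu1 : mu = d + 1
        · -- parity contradiction (symmetric)
          rw [hχdef] at hkey
          simp only at hkey
          rw [if_neg hw1, if_pos hu1] at hkey
          omega
        · -- both endpoints are endpoints of special edges: contradicts spacedness
          have hw_spec : ∃ ew ∈ inc G w, c ew = d + 1 := by
            have hmem : d + 1 ∈ (Finset.Icc 1 (d + 1)).erase mw :=
              Finset.mem_erase.mpr ⟨fun h => hw1 h.symm, Finset.mem_Icc.mpr ⟨by omega, le_rfl⟩⟩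
            rw [← himw] at hmem
            obtain ⟨ew, hew, hcew⟩ := Finset.mem_image.mp hmem
            exact ⟨ew, hew, hcew⟩
          have hu_spec : ∃ eu ∈ inc G u, c eu = d + 1 := by
            have hmem : d + 1 ∈ (Finset.Icc 1 (d + 1)).erase mu :=
              Finset.mem_erase.mpr ⟨fun h => hu1 h.symm, Finset.mem_Icc.mpr ⟨by omega, le_rfl⟩⟩
            rw [← himu] at hmem
            obtain ⟨eu, heu, hceu⟩ := Finset.mem_image.mp hmem
            exact ⟨eu, heu, hceu⟩
          obtain ⟨ew, hew, hcew⟩ := hw_spec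
          obtain ⟨eu, heu, hceu⟩ := hu_spec
          rw [mem_inc] at hew heu
          exact hspace ew hew.1 eu heu.1 hcew hceu
            ⟨w, v, u, hew.2, heu.2, hadj_vw.symm, hadj_vu, hwu⟩


end AddEdge
end

section
/- For every even integer d ≥ 4 and every g ∈ ℕ, there exists a d-regular graph G with girth at least g whose resistance equals d/2. -/
/-!
Map the free group on `k` letters to a finite group `Γ` so that no nontrivial word of length at
most `2g + 2` is killed: let the free group act on its ball of radius `2g + 2` by left
multiplication, extended arbitrarily to permutations of the ball. The bipartite
double cover `Γ × Bool` of its Cayley graph is `2k`-regular and properly `2k`-edge-coloured by the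
letters. Delete the vertex `(1, true)` and join its `2k` neighbours in inverse pairs by `k` new
edges of colour `2k + 1`. The result is `2k`-regular with `2|Γ| - 1` vertices, and has girth at
least `g`, since a cycle of length `m` reads a nonempty reduced word of length at most `2m` that
vanishes in `Γ`. An odd number of vertices forces at least `k` edges of the extra colour in every
proper `(2k + 1)`-edge-colouring, and the construction attains `k`.
-/

open scoped Classical
open Finset

theorem Equiv.Perm.exists_eqOn_of_injOn {X : Type*} [Finite X] {f : X → X} {s : Set X}
    (hf : s.InjOn f) : ∃ σ : Equiv.Perm X, s.EqOn σ f :=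
  ⟨(Equiv.Set.imageOfInjOn f s hf).extendSubtype, fun x hx => by
    rw [Equiv.extendSubtype_apply_of_mem _ _ hx]; rfl⟩

theorem Equiv.Perm.exists_mulLeft_eqOn {H : Type*} [Group H] (B : Set H) [Finite B] (g : H) :
    ∃ σ : Equiv.Perm B, ∀ x : B, g * (x : H) ∈ B → (σ x : H) = g * x := by
  let f (x : B) : B := if h : g * (x : H) ∈ B then ⟨g * x, h⟩ else x
  have hf : {x : B | g * (x : H) ∈ B}.InjOn f := fun x (hx : g * (x : H) ∈ B) y
      (hy : g * (y : H) ∈ B) hxy => by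
    simp only [f, dif_pos hx, dif_pos hy, Subtype.mk.injEq] at hxy
    exact Subtype.ext (mul_left_cancel hxy)
  obtain ⟨σ, hσ⟩ := exists_eqOn_of_injOn hf
  exact ⟨σ, fun x hx => by simp only [hσ hx, f, dif_pos hx]⟩

universe u

namespace FreeGroup

variable {α : Type u} [DecidableEq α]

def NoRelationsUpTo {Γ : Type*} [Group Γ] (φ : FreeGroup α →* Γ) (L : ℕ) : Prop :=
  ∀ x : FreeGroup α, x.toWord.length ≤ L → φ x = 1 → x = 1

lemma NoRelationsUpTo.mono {Γ : Type*} [Group Γ] {φ : FreeGroup α →* Γ} {L L' : ℕ}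
    (h : NoRelationsUpTo φ L) (hle : L' ≤ L) : NoRelationsUpTo φ L' :=
  fun x hx => h x (hx.trans hle)

lemma NoRelationsUpTo.map_mk_ne_one {Γ : Type*} [Group Γ] {φ : FreeGroup α →* Γ} {L : ℕ}
    (h : NoRelationsUpTo φ L) {w : List (α × Bool)} (hw : IsReduced w) (hne : w ≠ [])
    (hlen : w.length ≤ L) : φ (mk w) ≠ 1 := by
  intro h1
  have hw1 : mk w = 1 := h (mk w) (by rwa [toWord_mk, hw.reduce_eq]) h1
  apply hne
  rw [← hw.reduce_eq, ← toWord_mk, hw1, toWord_one]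

variable (α) in
def ball (L : ℕ) : Set (FreeGroup α) := {x | x.toWord.length ≤ L}

variable {L : ℕ}

lemma one_mem_ball : (1 : FreeGroup α) ∈ ball α L := by
  simp [ball]

lemma mk_mem_ball {w : List (α × Bool)} (hw : IsReduced w) (hlen : w.length ≤ L) :
    mk w ∈ ball α L := by
  simpa [ball, toWord_mk, hw.reduce_eq] using hlen

variable [Finite α]

instance : Finite (ball α L) :=
  ((List.finite_length_le (α × Bool) L).preimage toWord_injective.injOn).to_subtype

variable (α L) in
noncomputable def ballRep : FreeGroup α →* Equiv.Perm (ball α L) :=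
  lift fun i => (Equiv.Perm.exists_mulLeft_eqOn (ball α L) (of i)).choose

lemma ballRep_mk_singleton (a : α × Bool) (x : ball α L)
    (hx : mk [a] * (x : FreeGroup α) ∈ ball α L) :
    (ballRep α L (mk [a]) x : FreeGroup α) = mk [a] * x := by
  obtain ⟨i, b⟩ := a
  have hσ := (Equiv.Perm.exists_mulLeft_eqOn (ball α L) (of i)).choose_spec
  cases b
  · have hof : mk [(i, false)] = (of i)⁻¹ := by simp [of, inv_mk, invRev]
    rw [hof] at hx ⊢
    have hback : (Equiv.Perm.exists_mulLeft_eqOn (ball α L) (of i)).choose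
        ⟨(of i)⁻¹ * x, hx⟩ = x := Subtype.ext (by rw [hσ _ (by simp)]; simp)
    rw [_root_.map_inv, ballRep, lift_apply_of, Equiv.Perm.inv_eq_iff_eq.2 hback.symm]
  · simpa [ballRep, lift_mk, of] using hσ x hx

lemma ballRep_mk_apply_one {w : List (α × Bool)} (hw : IsReduced w) (hlen : w.length ≤ L) :
    (ballRep α L (mk w) ⟨1, one_mem_ball⟩ : FreeGroup α) = mk w := by
  induction w with
  | nil => rfl
  | cons a t ih =>
    have ht : IsReduced t := hw.infix (List.suffix_cons a t).isInfix
    have hlen' : t.length ≤ L := by simp at hlen; omega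
    have hmk : mk (a :: t) = mk [a] * mk t := by rw [mul_mk]; rfl
    have hrec : ballRep α L (mk t) ⟨1, one_mem_ball⟩ = ⟨mk t, mk_mem_ball ht hlen'⟩ :=
      Subtype.ext (ih ht hlen')
    rw [hmk, _root_.map_mul, Equiv.Perm.mul_apply, hrec,
      ballRep_mk_singleton _ _ (hmk ▸ mk_mem_ball hw hlen)]

theorem noRelationsUpTo_ballRep : NoRelationsUpTo (ballRep α L) L := fun x hx h1 => by
  have := ballRep_mk_apply_one (isReduced_toWord (x := x)) hx
  rw [mk_toWord, h1, Equiv.Perm.one_apply] at this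
  exact this.symm

variable (α L) in
theorem exists_noRelationsUpTo :
    ∃ (Γ : Type u) (_ : Group Γ) (_ : Finite Γ) (φ : FreeGroup α →* Γ),
      NoRelationsUpTo φ L :=
  ⟨_, _, inferInstance, ballRep α L, noRelationsUpTo_ballRep⟩

end FreeGroup

namespace AddEdge

variable {V : Type*}

noncomputable def colorClass [Fintype V] (G : SimpleGraph V) (c : Sym2 V → ℕ) (i : ℕ) :
    Finset (Sym2 V) :=
  univ.filter (fun e => e ∈ G.edgeSet ∧ c e = i)

lemma isProperEdgeColoring_of_adj {G : SimpleGraph V} {c : Sym2 V → ℕ}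
    (h : ∀ v w w', G.Adj v w → G.Adj v w' → c s(v, w) = c s(v, w') → w = w') :
    IsProperEdgeColoring G c := by
  rintro e he e' he' hne ⟨v, hv, hv'⟩
  obtain ⟨w, rfl⟩ := Sym2.mem_iff_exists.1 hv
  obtain ⟨w', rfl⟩ := Sym2.mem_iff_exists.1 hv'
  exact fun hc => hne (by rw [h v w w' he he' hc])

section ColorClasses

variable [Fintype V] {G : SimpleGraph V} {c : Sym2 V → ℕ}

lemma two_mul_card_colorClass_le (hc : IsProperEdgeColoring G c) (i : ℕ) :
    2 * #(colorClass G c i) ≤ Fintype.card V := by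
  have hdisj : (colorClass G c i : Set (Sym2 V)).PairwiseDisjoint Sym2.toFinset := by
    intro e he f hf hef
    simp only [colorClass, coe_filter, mem_univ, true_and, Set.mem_ofPred_eq] at he hf
    refine disjoint_left.2 fun v hve hvf => hc e he.1 f hf.1 hef ?_ (he.2.trans hf.2.symm)
    exact ⟨v, Sym2.mem_toFinset.1 hve, Sym2.mem_toFinset.1 hvf⟩
  calc 2 * #(colorClass G c i) = ∑ e ∈ colorClass G c i, #e.toFinset := by
        rw [mul_comm, ← smul_eq_mul, ← sum_const]
        refine sum_congr rfl fun e he => ?_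
        rw [Sym2.card_toFinset_of_not_isDiag]
        exact G.not_isDiag_of_mem_edgeSet (mem_filter.1 he).2.1
    _ = #((colorClass G c i).biUnion Sym2.toFinset) := (card_biUnion hdisj).symm
    _ ≤ Fintype.card V := card_le_univ _

lemma sum_card_colorClass {m : ℕ} (hc : ∀ e ∈ G.edgeSet, c e ∈ Icc 1 m) :
    ∑ i ∈ Icc 1 m, #(colorClass G c i) = #G.edgeFinset := by
  rw [card_eq_sum_card_fiberwise (f := c) fun e he => hc e (SimpleGraph.mem_edgeFinset.1 he)]
  refine sum_congr rfl fun i _ => congrArg card ?_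
  ext e
  simp [colorClass]

/-- Each colour class is a matching, so when `V` has odd size the `2k` colours other than `2k+1`
cover at most `k (|V| - 1)` of the `k |V|` edges. -/
lemma le_card_colorClass_of_odd {k : ℕ} (hreg : G.IsRegularOfDegree (2 * k))
    (hodd : Odd (Fintype.card V)) (hc : ∀ e ∈ G.edgeSet, c e ∈ Icc 1 (2 * k + 1))
    (hproper : IsProperEdgeColoring G c) : k ≤ #(colorClass G c (2 * k + 1)) := by
  have hedges : Fintype.card V * (2 * k) = 2 * #G.edgeFinset := by
    rw [← G.sum_degrees_eq_twice_card_edges, sum_congr rfl fun v _ => hreg v, sum_const,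
      card_univ, smul_eq_mul]
  have hsmall : ∑ i ∈ Icc 1 (2 * k), (2 * #(colorClass G c i) + 1)
      ≤ ∑ _i ∈ Icc 1 (2 * k), Fintype.card V := by
    refine sum_le_sum fun i _ => ?_
    have := two_mul_card_colorClass_le hproper i
    rcases hodd with ⟨n, hn⟩
    omega
  rw [← sum_card_colorClass hc, sum_Icc_succ_top (by omega)] at hedges
  rw [sum_add_distrib, ← mul_sum, sum_const, sum_const, Nat.card_Icc, Nat.add_sub_cancel,
    smul_eq_mul, smul_eq_mul] at hsmall
  linarith

lemma resistance_eq_of_odd {k : ℕ} (hreg : G.IsRegularOfDegree (2 * k))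
    (hodd : Odd (Fintype.card V)) (hc : ∀ e ∈ G.edgeSet, c e ∈ Icc 1 (2 * k + 1))
    (hproper : IsProperEdgeColoring G c) (hcard : #(colorClass G c (2 * k + 1)) = k) :
    resistance G (2 * k) = k := by
  refine le_antisymm (Nat.sInf_le ⟨c, hc, hproper, hcard⟩)
    (le_csInf ⟨k, c, hc, hproper, hcard⟩ ?_)
  rintro r ⟨c', hc', hproper', rfl⟩
  exact le_card_colorClass_of_odd hreg hodd hc' hproper'

end ColorClasses

section Iso

variable {W : Type*} {G : SimpleGraph V} {G' : SimpleGraph W}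

lemma IsProperEdgeColoring.comp_iso (f : G ≃g G') {c : Sym2 W → ℕ}
    (hc : IsProperEdgeColoring G' c) : IsProperEdgeColoring G (c ∘ Sym2.map f) := by
  rintro e he e' he' hne ⟨v, hv, hv'⟩
  refine hc _ (f.map_mem_edgeSet_iff.2 he) _ (f.map_mem_edgeSet_iff.2 he')
    ((Sym2.map.injective f.injective).ne hne) ⟨f v, Sym2.mem_map.2 ⟨v, hv, rfl⟩, ?_⟩
  exact Sym2.mem_map.2 ⟨v, hv', rfl⟩

variable [Fintype V] [Fintype W]

lemma isRegularOfDegree_of_iso [DecidableRel G.Adj] [DecidableRel G'.Adj] (f : G ≃g G')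
    {d : ℕ} (h : G.IsRegularOfDegree d) : G'.IsRegularOfDegree d := fun v => by
  rw [← f.apply_symm_apply v, f.degree_eq]
  exact h _

lemma card_colorClass_comp_iso (f : G ≃g G') (c : Sym2 W → ℕ) (i : ℕ) :
    #(colorClass G (c ∘ Sym2.map f) i) = #(colorClass G' c i) := by
  refine card_nbij' (Sym2.map f) (Sym2.map f.symm) ?_ ?_ ?_ ?_ <;>
    intro e <;>
    simp [colorClass, Sym2.map_map, f.map_mem_edgeSet_iff, f.symm.map_mem_edgeSet_iff]

lemma exists_coloring_of_iso (f : G ≃g G') {d r : ℕ}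
    (h : ∃ c : Sym2 W → ℕ, (∀ e ∈ G'.edgeSet, c e ∈ Icc 1 (d + 1)) ∧
      IsProperEdgeColoring G' c ∧ #(colorClass G' c (d + 1)) = r) :
    ∃ c : Sym2 V → ℕ, (∀ e ∈ G.edgeSet, c e ∈ Icc 1 (d + 1)) ∧
      IsProperEdgeColoring G c ∧ #(colorClass G c (d + 1)) = r := by
  obtain ⟨c, hc, hproper, rfl⟩ := h
  exact ⟨c ∘ Sym2.map f, fun e he => hc _ (f.map_mem_edgeSet_iff.2 he), hproper.comp_iso f,
    card_colorClass_comp_iso f c _⟩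

lemma resistance_congr (f : G ≃g G') (d : ℕ) : resistance G d = resistance G' d :=
  congrArg sInf <| Set.ext fun _ => ⟨exists_coloring_of_iso f.symm, exists_coloring_of_iso f⟩

end Iso

namespace PuncturedCover

open FreeGroup

abbrev Punctured (Γ : Type*) [Group Γ] := {p : Γ × Bool // p ≠ (1, true)}

variable {α Γ : Type*} [Group Γ] (φ : FreeGroup α →* Γ)

def invLetter (a : α × Bool) : α × Bool := (a.1, !a.2)

def gen (a : α × Bool) : Γ := φ (mk [a])

lemma gen_invLetter (a : α × Bool) : gen φ (invLetter a) = (gen φ a)⁻¹ := by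
  rw [gen, gen, ← _root_.map_inv, inv_mk]
  rfl

def HitsPuncture (x : Punctured Γ) (a : α × Bool) : Prop :=
  x.1.2 = false ∧ x.1.1 * gen φ a = 1

/-- A dart that would end at the removed vertex `(1, true)` continues along a second `a`-edge;
these redirected darts are the new edges, joining the neighbours of `(1, true)` in inverse
pairs. -/
noncomputable def step (x : Punctured Γ) (a : α × Bool) : Punctured Γ :=
  if h : HitsPuncture φ x a then ⟨(x.1.1 * gen φ a * gen φ a, false), by simp⟩
  else ⟨(x.1.1 * gen φ a, !x.1.2), fun hx => h ⟨by simpa using congrArg Prod.snd hx,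
    congrArg Prod.fst hx⟩⟩

variable {φ} in
lemma coe_step_of_hitsPuncture {x : Punctured Γ} {a : α × Bool} (h : HitsPuncture φ x a) :
    (step φ x a : Γ × Bool) = (x.1.1 * gen φ a * gen φ a, false) := by
  rw [step, dif_pos h]

variable {φ} in
lemma coe_step_of_not_hitsPuncture {x : Punctured Γ} {a : α × Bool} (h : ¬HitsPuncture φ x a) :
    (step φ x a : Γ × Bool) = (x.1.1 * gen φ a, !x.1.2) := by
  rw [step, dif_neg h]

variable {φ} in
lemma hitsPuncture_step_invLetter {x : Punctured Γ} {a : α × Bool} :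
    HitsPuncture φ (step φ x a) (invLetter a) ↔ HitsPuncture φ x a := by
  by_cases h : HitsPuncture φ x a
  · refine iff_of_true ?_ h
    simp only [HitsPuncture, coe_step_of_hitsPuncture h, gen_invLetter, mul_inv_cancel_right]
    exact ⟨trivial, h.2⟩
  · refine iff_of_false ?_ h
    simp only [HitsPuncture, coe_step_of_not_hitsPuncture h, gen_invLetter,
      mul_inv_cancel_right, Bool.not_eq_false']
    exact fun ⟨h2, h1⟩ => x.2 (Prod.ext h1 h2)

lemma step_step_invLetter (x : Punctured Γ) (a : α × Bool) :
    step φ (step φ x a) (invLetter a) = x := by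
  apply Subtype.ext
  by_cases h : HitsPuncture φ x a
  · rw [coe_step_of_hitsPuncture (hitsPuncture_step_invLetter.2 h),
      coe_step_of_hitsPuncture h, gen_invLetter]
    simp only [mul_inv_cancel_right]
    exact Prod.ext rfl h.1.symm
  · rw [coe_step_of_not_hitsPuncture (hitsPuncture_step_invLetter.not.2 h),
      coe_step_of_not_hitsPuncture h, gen_invLetter]
    simp

def chordEnd (a : α × Bool) : Punctured Γ := ⟨(gen φ a, false), by simp⟩

variable {φ} in
lemma hitsPuncture_iff {x : Punctured Γ} {a : α × Bool} :
    HitsPuncture φ x a ↔ x = chordEnd φ (invLetter a) := by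
  simp [HitsPuncture, chordEnd, Subtype.ext_iff, Prod.ext_iff, gen_invLetter,
    mul_eq_one_iff_eq_inv, and_comm]

lemma step_chordEnd_invLetter (a : α × Bool) :
    step φ (chordEnd φ (invLetter a)) a = chordEnd φ a :=
  Subtype.ext <| by
    rw [coe_step_of_hitsPuncture (hitsPuncture_iff.2 rfl)]
    simp [chordEnd, gen_invLetter]

def puncturedCover : SimpleGraph (Punctured Γ) where
  Adj x y := x ≠ y ∧ ∃ a, step φ x a = y
  symm := ⟨by
    rintro x _ ⟨hne, a, rfl⟩
    exact ⟨hne.symm, invLetter a, step_step_invLetter φ x a⟩⟩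
  loopless := ⟨fun _ h => h.1 rfl⟩

section NoShortRelations

variable {φ}

lemma map_mk_cons (a : α × Bool) (w : List (α × Bool)) :
    φ (mk (a :: w)) = gen φ a * φ (mk w) := by
  rw [gen, ← _root_.map_mul, mul_mk]
  rfl

variable [DecidableEq α]

lemma gen_injective (hφ : NoRelationsUpTo φ 2) : Function.Injective (gen φ) := by
  intro a b hab
  by_contra hne
  refine hφ.map_mk_ne_one (w := [invLetter a, b]) ?_ (by simp) (by simp) ?_
  · refine isReduced_cons_cons.2 ⟨fun h1 => ?_, IsReduced.singleton⟩
    exact (Bool.eq_not.2 fun h2 => hne (Prod.ext h1 h2.symm)).symm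
  · rw [map_mk_cons, gen_invLetter, ← gen, hab, inv_mul_cancel]

lemma gen_mul_self_ne_one (hφ : NoRelationsUpTo φ 2) (a : α × Bool) :
    gen φ a * gen φ a ≠ 1 := by
  have := hφ.map_mk_ne_one (w := [a, a]) (by simp [IsReduced.singleton]) (by simp) (by simp)
  rwa [map_mk_cons] at this

lemma step_ne_self (hφ : NoRelationsUpTo φ 2) (x : Punctured Γ) (a : α × Bool) :
    step φ x a ≠ x := by
  intro h
  replace h := congrArg Subtype.val h
  by_cases ha : HitsPuncture φ x a
  · rw [coe_step_of_hitsPuncture ha, mul_assoc] at h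
    exact gen_mul_self_ne_one hφ a (mul_eq_left.1 (congrArg Prod.fst h))
  · rw [coe_step_of_not_hitsPuncture ha] at h
    exact Bool.not_ne_self _ (congrArg Prod.snd h)

lemma adj_iff (hφ : NoRelationsUpTo φ 2) {x y : Punctured Γ} :
    (puncturedCover φ).Adj x y ↔ ∃ a, step φ x a = y :=
  ⟨fun h => h.2, fun ⟨a, ha⟩ => ⟨ha ▸ (step_ne_self hφ x a).symm, a, ha⟩⟩

lemma step_injective (hφ : NoRelationsUpTo φ 2) (x : Punctured Γ) :
    Function.Injective (step φ x) := by
  intro a b hab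
  replace hab := congrArg Subtype.val hab
  apply gen_injective hφ
  by_cases ha : HitsPuncture φ x a <;> by_cases hb : HitsPuncture φ x b
  · exact mul_left_cancel (ha.2.trans hb.2.symm)
  · rw [coe_step_of_hitsPuncture ha, coe_step_of_not_hitsPuncture hb, ha.1] at hab
    simp at hab
  · rw [coe_step_of_not_hitsPuncture ha, coe_step_of_hitsPuncture hb, hb.1] at hab
    simp at hab
  · rw [coe_step_of_not_hitsPuncture ha, coe_step_of_not_hitsPuncture hb] at hab
    exact mul_left_cancel (congrArg Prod.fst hab)

theorem isRegularOfDegree_puncturedCover [Fintype α] [Fintype Γ] (hφ : NoRelationsUpTo φ 2) :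
    (puncturedCover φ).IsRegularOfDegree (2 * Fintype.card α) := fun x => by
  have : (puncturedCover φ).neighborFinset x = univ.image (step φ x) := by
    ext y
    simp [adj_iff hφ]
  rw [← SimpleGraph.card_neighborFinset_eq_degree, this,
    card_image_of_injective _ (step_injective hφ x), card_univ, Fintype.card_prod,
    Fintype.card_bool, mul_comm]

end NoShortRelations

section Girth

variable {φ}

noncomputable def label {x y : Punctured Γ} (h : (puncturedCover φ).Adj x y) : α × Bool :=
  h.2.choose

lemma step_label {x y : Punctured Γ} (h : (puncturedCover φ).Adj x y) :
    step φ x (label h) = y :=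
  h.2.choose_spec

variable (φ) in
noncomputable def stepWord (x : Punctured Γ) (a : α × Bool) : List (α × Bool) :=
  if HitsPuncture φ x a then [a, a] else [a]

lemma mul_map_mk_stepWord (x : Punctured Γ) (a : α × Bool) :
    x.1.1 * φ (mk (stepWord φ x a)) = (step φ x a).1.1 := by
  by_cases h : HitsPuncture φ x a
  · simp [stepWord, h, coe_step_of_hitsPuncture h, map_mk_cons, ← one_eq_mk, mul_assoc]
  · simp [stepWord, h, coe_step_of_not_hitsPuncture h, map_mk_cons, ← one_eq_mk]

noncomputable def walkWord :
    ∀ {x y : Punctured Γ}, (puncturedCover φ).Walk x y → List (α × Bool)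
  | _, _, .nil => []
  | x, _, .cons h p => stepWord φ x (label h) ++ walkWord p

lemma mul_map_mk_walkWord {x y : Punctured Γ} (p : (puncturedCover φ).Walk x y) :
    x.1.1 * φ (mk (walkWord p)) = y.1.1 := by
  induction p with
  | nil => simp [walkWord, ← one_eq_mk]
  | cons h p ih =>
    rw [walkWord, ← mul_mk, _root_.map_mul, ← mul_assoc, mul_map_mk_stepWord, step_label, ih]

lemma length_walkWord_le {x y : Punctured Γ} (p : (puncturedCover φ).Walk x y) :
    (walkWord p).length ≤ 2 * p.length := by
  induction p with
  | nil => simp [walkWord]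
  | @cons u _ _ h p ih =>
    have : (stepWord φ u (label h)).length ≤ 2 := by unfold stepWord; split_ifs <;> simp
    simp only [walkWord, List.length_append, SimpleGraph.Walk.length_cons]
    omega

lemma head?_walkWord_cons {x y z : Punctured Γ} (h : (puncturedCover φ).Adj x y)
    (p : (puncturedCover φ).Walk y z) : (walkWord (.cons h p)).head? = some (label h) := by
  simp only [walkWord, stepWord]
  split_ifs <;> simp

/-- A letter followed by its inverse would walk straight back along the same edge. -/
lemma isReduced_walkWord {x y : Punctured Γ} {p : (puncturedCover φ).Walk x y}
    (hp : p.IsTrail) : IsReduced (walkWord p) := by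
  induction p with
  | nil => exact IsReduced.nil
  | @cons u _ _ h p ih =>
    rw [SimpleGraph.Walk.isTrail_cons] at hp
    refine List.isChain_append.2 ⟨?_, ih hp.1, ?_⟩
    · unfold stepWord
      split_ifs <;> simp
    cases p with
    | nil => simp [walkWord]
    | cons h' q =>
      intro a ha b hb hab
      rw [head?_walkWord_cons, Option.mem_some_iff] at hb
      have ha' : a = label h := by
        unfold stepWord at ha
        split_ifs at ha <;> simpa [eq_comm] using ha
      subst ha' hb
      by_contra hne
      have hinv : label h' = invLetter (label h) :=
        Prod.ext hab.symm (Bool.eq_not.2 (Ne.symm hne))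
      have hback := step_step_invLetter φ u (label h)
      rw [← hinv, step_label, step_label] at hback
      subst hback
      exact hp.2 (by simp [Sym2.eq_swap])

variable [DecidableEq α]

lemma lt_two_mul_length_of_isCycle {L : ℕ} (hφ : NoRelationsUpTo φ L) {v : Punctured Γ}
    {c : (puncturedCover φ).Walk v v} (hc : c.IsCycle) : L < 2 * c.length := by
  by_contra! hle
  have hne : walkWord c ≠ [] := by
    cases c with
    | nil => exact absurd hc SimpleGraph.Walk.not_isCycle_nil
    | cons h p =>
      intro h0
      simpa [h0] using head?_walkWord_cons h p
  refine hφ.map_mk_ne_one (isReduced_walkWord hc.isTrail) hne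
    ((length_walkWord_le c).trans hle) ?_
  exact mul_eq_left.1 (mul_map_mk_walkWord c)

theorem le_egirth_puncturedCover {g : ℕ} (hφ : NoRelationsUpTo φ (2 * g)) :
    (g : ℕ∞) ≤ (puncturedCover φ).egirth :=
  SimpleGraph.le_egirth.2 fun _ _ hc => by
    have := lt_two_mul_length_of_isCycle hφ hc
    exact_mod_cast (by omega : g ≤ _)

end Girth

section Coloring

variable [Fintype α]

noncomputable def letterColor (a : α × Bool) : ℕ := Fintype.equivFin (α × Bool) a + 1

lemma letterColor_injective : Function.Injective (letterColor (α := α)) := fun a b h =>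
  (Fintype.equivFin _).injective (Fin.ext (by simpa [letterColor] using h))

lemma letterColor_mem_Icc (a : α × Bool) : letterColor a ∈ Icc 1 (2 * Fintype.card α) := by
  have := (Fintype.equivFin (α × Bool) a).isLt
  simp only [Fintype.card_prod, Fintype.card_bool] at this
  simp only [letterColor, mem_Icc]
  omega

/-- The letter is inverted at vertices `(g, true)` so that both darts of an edge get the same
colour. -/
noncomputable def dartColor (x : Punctured Γ) (a : α × Bool) : ℕ :=
  if HitsPuncture φ x a then 2 * Fintype.card α + 1 else letterColor (a.1, a.2 ^^ x.1.2)

lemma dartColor_step_invLetter (x : Punctured Γ) (a : α × Bool) :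
    dartColor φ (step φ x a) (invLetter a) = dartColor φ x a := by
  by_cases h : HitsPuncture φ x a
  · simp [dartColor, h, hitsPuncture_step_invLetter.2 h]
  · rw [dartColor, if_neg (hitsPuncture_step_invLetter.not.2 h), dartColor, if_neg h,
      coe_step_of_not_hitsPuncture h]
    simp [invLetter]

lemma dartColor_mem_Icc (x : Punctured Γ) (a : α × Bool) :
    dartColor φ x a ∈ Icc 1 (2 * Fintype.card α + 1) := by
  have := mem_Icc.1 (letterColor_mem_Icc (a.1, a.2 ^^ x.1.2))
  unfold dartColor
  split_ifs <;> simp only [mem_Icc] <;> omega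

lemma dartColor_eq_iff (x : Punctured Γ) (a : α × Bool) :
    dartColor φ x a = 2 * Fintype.card α + 1 ↔ HitsPuncture φ x a := by
  have := mem_Icc.1 (letterColor_mem_Icc (a.1, a.2 ^^ x.1.2))
  unfold dartColor
  split_ifs with h
  · exact iff_of_true rfl h
  · simp only [h, iff_false]
    omega

variable {φ} [DecidableEq α]

lemma dartColor_injective (hφ : NoRelationsUpTo φ 2) (x : Punctured Γ) :
    Function.Injective (dartColor φ x) := by
  intro a b hab
  have hlt (c : α × Bool) := mem_Icc.1 (letterColor_mem_Icc c)
  by_cases ha : HitsPuncture φ x a <;> by_cases hb : HitsPuncture φ x b <;>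
    simp only [dartColor, ha, hb, if_true, if_false] at hab
  · exact gen_injective hφ (mul_left_cancel (ha.2.trans hb.2.symm))
  · linarith [hlt (b.1, b.2 ^^ x.1.2)]
  · linarith [hlt (a.1, a.2 ^^ x.1.2)]
  · exact Prod.ext_iff.2 (by simpa using letterColor_injective hab)

variable (φ) in
noncomputable def edgeColor (e : Sym2 (Punctured Γ)) : ℕ :=
  if h : ∃ p : Punctured Γ × (α × Bool), e = s(p.1, step φ p.1 p.2) then
    dartColor φ h.choose.1 h.choose.2
  else 0

lemma edgeColor_step (hφ : NoRelationsUpTo φ 2) (x : Punctured Γ) (a : α × Bool) :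
    edgeColor φ s(x, step φ x a) = dartColor φ x a := by
  have h : ∃ p : Punctured Γ × (α × Bool), s(x, step φ x a) = s(p.1, step φ p.1 p.2) :=
    ⟨(x, a), rfl⟩
  rw [edgeColor, dif_pos h]
  have hp := h.choose_spec
  generalize h.choose = p at hp ⊢
  obtain ⟨y, b⟩ := p
  rcases Sym2.eq_iff.1 hp with ⟨rfl, hb⟩ | ⟨hx, rfl⟩
  · rw [step_injective hφ x hb]
  · rw [step_injective hφ _ (hx.symm.trans (step_step_invLetter φ x a).symm),
      dartColor_step_invLetter]

theorem isProperEdgeColoring_edgeColor (hφ : NoRelationsUpTo φ 2) :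
    IsProperEdgeColoring (puncturedCover φ) (edgeColor φ) :=
  isProperEdgeColoring_of_adj fun v _ _ hw hw' hc => by
    obtain ⟨a, rfl⟩ := (adj_iff hφ).1 hw
    obtain ⟨b, rfl⟩ := (adj_iff hφ).1 hw'
    rw [edgeColor_step hφ, edgeColor_step hφ] at hc
    rw [dartColor_injective hφ v hc]

lemma edgeColor_mem_Icc (hφ : NoRelationsUpTo φ 2) {e : Sym2 (Punctured Γ)}
    (he : e ∈ (puncturedCover φ).edgeSet) :
    edgeColor φ e ∈ Icc 1 (2 * Fintype.card α + 1) := by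
  induction e with
  | _ x y =>
    obtain ⟨a, rfl⟩ := (adj_iff hφ).1 (SimpleGraph.mem_edgeSet _ |>.1 he)
    rw [edgeColor_step hφ]
    exact dartColor_mem_Icc φ x a

lemma colorClass_edgeColor [Fintype Γ] (hφ : NoRelationsUpTo φ 2) :
    colorClass (puncturedCover φ) (edgeColor φ) (2 * Fintype.card α + 1) =
      univ.image fun i : α => s(chordEnd φ (i, false), chordEnd φ (i, true)) := by
  ext e
  simp only [colorClass, mem_filter, mem_univ, true_and, mem_image]
  constructor
  · rintro ⟨he, hc⟩
    induction e with
    | _ x y =>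
      obtain ⟨a, rfl⟩ := (adj_iff hφ).1 (SimpleGraph.mem_edgeSet _ |>.1 he)
      rw [edgeColor_step hφ, dartColor_eq_iff, hitsPuncture_iff] at hc
      subst hc
      refine ⟨a.1, ?_⟩
      rw [step_chordEnd_invLetter]
      obtain ⟨i, _ | _⟩ := a
      · exact Sym2.eq_swap
      · rfl
  · rintro ⟨i, rfl⟩
    have hstep : step φ (chordEnd φ (i, false)) (i, true) = chordEnd φ (i, true) :=
      step_chordEnd_invLetter φ (i, true)
    have hhit : HitsPuncture φ (chordEnd φ (i, false)) (i, true) := hitsPuncture_iff.2 rfl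
    rw [← hstep, edgeColor_step hφ, dartColor_eq_iff]
    exact ⟨(adj_iff hφ).2 ⟨_, rfl⟩, hhit⟩

lemma card_colorClass_edgeColor [Fintype Γ] (hφ : NoRelationsUpTo φ 2) :
    #(colorClass (puncturedCover φ) (edgeColor φ) (2 * Fintype.card α + 1)) =
      Fintype.card α := by
  rw [colorClass_edgeColor hφ, card_image_of_injective, card_univ]
  intro i j hij
  have hinj : Function.Injective (chordEnd φ) := fun a b h =>
    gen_injective hφ (congrArg Prod.fst (congrArg Subtype.val h))
  rcases Sym2.eq_iff.1 hij with ⟨h, _⟩ | ⟨h, _⟩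
  · exact congrArg Prod.fst (hinj h)
  · exact absurd (congrArg Prod.snd (hinj h)) (by simp)

end Coloring

lemma odd_card_punctured [Fintype Γ] : Odd (Fintype.card (Punctured Γ)) := by
  have := Fintype.card_pos (α := Γ)
  simp only [Fintype.card_subtype_compl, Fintype.card_prod, Fintype.card_bool,
    Fintype.card_unique, Nat.odd_iff]
  omega

variable {φ} in
theorem resistance_puncturedCover [Fintype α] [DecidableEq α] [Fintype Γ]
    (hφ : NoRelationsUpTo φ 2) :
    resistance (puncturedCover φ) (2 * Fintype.card α) = Fintype.card α :=
  resistance_eq_of_odd (isRegularOfDegree_puncturedCover hφ) odd_card_punctured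
    (fun _ he => edgeColor_mem_Icc hφ he) (isProperEdgeColoring_edgeColor hφ)
    (card_colorClass_edgeColor hφ)

end PuncturedCover

theorem exists_regular_girth_resistance_general (d : ℕ) (hd : Even d)
    (g : ℕ) :
    ∃ (n : ℕ) (G : SimpleGraph (Fin n)),
      G.IsRegularOfDegree d ∧ (g : ℕ∞) ≤ G.egirth ∧ resistance G d = d / 2 := by
  obtain ⟨k, rfl⟩ := hd
  obtain ⟨Γ, _, _, φ, hφ⟩ := FreeGroup.exists_noRelationsUpTo (Fin k) (2 * g + 2)
  have : Fintype Γ := Fintype.ofFinite Γ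
  have hk : k + k = 2 * Fintype.card (Fin k) := by rw [Fintype.card_fin, two_mul]
  have hφ2 : FreeGroup.NoRelationsUpTo φ 2 := hφ.mono (by omega)
  let G := PuncturedCover.puncturedCover φ
  let f := G.overFinIso rfl
  refine ⟨_, G.overFin rfl, ?_, ?_, ?_⟩
  · rw [hk]
    exact isRegularOfDegree_of_iso f (PuncturedCover.isRegularOfDegree_puncturedCover hφ2)
  · rw [← f.egirth_eq]
    exact PuncturedCover.le_egirth_puncturedCover (hφ.mono (by omega))
  · rw [← resistance_congr f, hk, PuncturedCover.resistance_puncturedCover hφ2]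
    simp

/-- For every even `d ≥ 4` and every `g`, there is a `d`-regular
graph with girth at least `g` and resistance exactly `d / 2`. -/
theorem exists_regular_girth_resistance (d : ℕ) (hd : Even d) (hd4 : 4 ≤ d)
    (g : ℕ) :
    ∃ (n : ℕ) (G : SimpleGraph (Fin n)),
      G.IsRegularOfDegree d ∧ (g : ℕ∞) ≤ G.egirth ∧ resistance G d = d / 2 :=
  exists_regular_girth_resistance_general d hd g

end AddEdge
end
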